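/- arXiv:1910.12161 — 2 statements merged into one kernel-verified Lean document; each statement's English description precedes it below -/
import Mathlib

section
/- For measurable f:(0,∞)→ℝ, ∫₀^∞ (1/x)((1/x)∫₀^x f(y) dy)² dx ≤ ∫₀^∞ f(x)²/x dx. -/
/-!
By Cauchy–Schwarz, `(∫₀ˣ f)² ≤ x ∫₀ˣ f²`, so the left-hand side is at most
`∫₀^∞ x⁻² ∫₀ˣ f(y)² dy dx`. Exchanging the order of integration (Tonelli) and using
`∫_y^∞ x⁻² dx = y⁻¹` turns this into `∫₀^∞ f(y)² / y dy`.
-/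

open MeasureTheory Set
open scoped ENNReal

section CauchySchwarz

variable {α : Type*} [MeasurableSpace α] (μ : Measure α)

theorem lintegral_sq_le_measure_univ_mul {g : α → ℝ≥0∞} (hg : AEMeasurable g μ) :
    (∫⁻ a, g a ∂μ) ^ 2 ≤ μ univ * ∫⁻ a, g a ^ 2 ∂μ := by
  have holder := ENNReal.lintegral_mul_le_Lp_mul_Lq μ Real.HolderConjugate.two_two hg
    aemeasurable_const (g := fun _ => 1)
  simp only [Pi.mul_apply, mul_one, ENNReal.one_rpow, lintegral_const, one_mul] at holder
  calc (∫⁻ a, g a ∂μ) ^ 2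
      ≤ ((∫⁻ a, g a ^ (2 : ℝ) ∂μ) ^ (1 / 2 : ℝ) * μ univ ^ (1 / 2 : ℝ)) ^ 2 := by
        gcongr
    _ = μ univ * ∫⁻ a, g a ^ 2 ∂μ := by
      rw [← ENNReal.mul_rpow_of_nonneg _ _ (by norm_num), ← ENNReal.rpow_natCast,
        ← ENNReal.rpow_mul]
      norm_num [mul_comm]

theorem ofReal_sq_integral_le_measure_univ_mul {f : α → ℝ} (hf : AEMeasurable f μ) :
    ENNReal.ofReal ((∫ a, f a ∂μ) ^ 2) ≤ μ univ * ∫⁻ a, ENNReal.ofReal (f a ^ 2) ∂μ := by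
  calc ENNReal.ofReal ((∫ a, f a ∂μ) ^ 2) = ‖∫ a, f a ∂μ‖ₑ ^ 2 := by
        rw [← sq_abs, ENNReal.ofReal_pow (abs_nonneg _), ← Real.enorm_eq_ofReal_abs]
    _ ≤ (∫⁻ a, ‖f a‖ₑ ∂μ) ^ 2 := by gcongr; exact enorm_integral_le_lintegral_enorm _
    _ ≤ μ univ * ∫⁻ a, ‖f a‖ₑ ^ 2 ∂μ := lintegral_sq_le_measure_univ_mul μ hf.enorm
    _ = μ univ * ∫⁻ a, ENNReal.ofReal (f a ^ 2) ∂μ := by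
        simp only [Real.enorm_eq_ofReal_abs, ← ENNReal.ofReal_pow (abs_nonneg _), sq_abs]

end CauchySchwarz

theorem lintegral_Ioi_inv_sq {y : ℝ} (hy : 0 < y) :
    ∫⁻ x in Ioi y, ENNReal.ofReal (x ^ 2)⁻¹ = ENNReal.ofReal y⁻¹ := by
  have hrpow : ∀ x ∈ Ioi y, ENNReal.ofReal (x ^ 2)⁻¹ = ENNReal.ofReal (x ^ (-2 : ℝ)) :=
    fun x hx => by simp [Real.rpow_neg (hy.trans hx).le]
  rw [setLIntegral_congr_fun measurableSet_Ioi hrpow,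
    ← ofReal_integral_eq_lintegral_ofReal (integrableOn_Ioi_rpow_of_lt (by norm_num) hy)
      (ae_restrict_of_forall_mem measurableSet_Ioi fun x hx =>
        Real.rpow_nonneg (hy.trans hx).le _),
    integral_Ioi_rpow_of_lt (by norm_num) hy]
  norm_num [Real.rpow_neg_one]

theorem lintegral_Ioi_lintegral_Ioc_swap (a : ℝ) {h : ℝ → ℝ → ℝ≥0∞}
    (hh : Measurable (Function.uncurry h)) :
    ∫⁻ x in Ioi a, ∫⁻ y in Ioc a x, h x y = ∫⁻ y in Ioi a, ∫⁻ x in Ici y, h x y := by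
  have hmeas := hh.indicator (measurableSet_le measurable_snd measurable_fst)
  calc ∫⁻ x in Ioi a, ∫⁻ y in Ioc a x, h x y
      = ∫⁻ x in Ioi a, ∫⁻ y in Ioi a, (Iic x).indicator (h x) y := by
        refine lintegral_congr fun x => ?_
        rw [lintegral_indicator measurableSet_Iic, Measure.restrict_restrict measurableSet_Iic,
          Iic_inter_Ioi]
    _ = ∫⁻ y in Ioi a, ∫⁻ x in Ioi a, (Iic x).indicator (h x) y :=
        lintegral_lintegral_swap hmeas.aemeasurable
    _ = ∫⁻ y in Ioi a, ∫⁻ x in Ici y, h x y := by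
        refine setLIntegral_congr_fun measurableSet_Ioi fun y hy => ?_
        have hind : ∀ x, (Iic x).indicator (h x) y = (Ici y).indicator (fun x => h x y) x :=
          fun x => by simp only [indicator, mem_Iic, mem_Ici]
        simp_rw [hind]
        rw [lintegral_indicator measurableSet_Ici, Measure.restrict_restrict measurableSet_Ici,
          inter_eq_left.mpr (Ici_subset_Ioi.mpr hy)]

theorem ofReal_inv_mul_sq_average_le {f : ℝ → ℝ} (hf : Measurable f) {x : ℝ} (hx : 0 < x) :
    ENNReal.ofReal ((1 / x) * ((1 / x) * ∫ y in (0:ℝ)..x, f y) ^ 2) ≤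
      ENNReal.ofReal (x ^ 2)⁻¹ * ∫⁻ y in Ioc 0 x, ENNReal.ofReal (f y ^ 2) := by
  have cauchy_schwarz := ofReal_sq_integral_le_measure_univ_mul (volume.restrict (Ioc 0 x))
    hf.aemeasurable
  rw [Measure.restrict_apply_univ, Real.volume_Ioc, sub_zero] at cauchy_schwarz
  rw [intervalIntegral.integral_of_le hx.le]
  calc ENNReal.ofReal ((1 / x) * ((1 / x) * ∫ y in Ioc 0 x, f y) ^ 2)
      = ENNReal.ofReal (x ^ 3)⁻¹ * ENNReal.ofReal ((∫ y in Ioc 0 x, f y) ^ 2) := by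
        rw [← ENNReal.ofReal_mul (by positivity)]
        ring_nf
    _ ≤ ENNReal.ofReal (x ^ 3)⁻¹ *
          (ENNReal.ofReal x * ∫⁻ y in Ioc 0 x, ENNReal.ofReal (f y ^ 2)) := by
        gcongr
    _ = ENNReal.ofReal (x ^ 2)⁻¹ * ∫⁻ y in Ioc 0 x, ENNReal.ofReal (f y ^ 2) := by
        rw [← mul_assoc, ← ENNReal.ofReal_mul (by positivity)]
        congr 2
        field_simp

theorem generalized_hardy_inequality (f : ℝ → ℝ) (hf : Measurable f) :
    ∫⁻ x in Ioi (0:ℝ), ENNReal.ofReal ((1 / x) * ((1 / x) * ∫ y in (0:ℝ)..x, f y) ^ 2) ≤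
      ∫⁻ x in Ioi (0:ℝ), ENNReal.ofReal (f x ^ 2 / x) := by
  calc ∫⁻ x in Ioi (0:ℝ), ENNReal.ofReal ((1 / x) * ((1 / x) * ∫ y in (0:ℝ)..x, f y) ^ 2)
      ≤ ∫⁻ x in Ioi 0, ENNReal.ofReal (x ^ 2)⁻¹ * ∫⁻ y in Ioc 0 x, ENNReal.ofReal (f y ^ 2) :=
        setLIntegral_mono' measurableSet_Ioi fun x hx => ofReal_inv_mul_sq_average_le hf hx
    _ = ∫⁻ x in Ioi 0, ∫⁻ y in Ioc 0 x,
          ENNReal.ofReal (x ^ 2)⁻¹ * ENNReal.ofReal (f y ^ 2) := by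
        simp_rw [lintegral_const_mul' _ _ ENNReal.ofReal_ne_top]
    _ = ∫⁻ y in Ioi 0, ∫⁻ x in Ici y,
          ENNReal.ofReal (x ^ 2)⁻¹ * ENNReal.ofReal (f y ^ 2) :=
        lintegral_Ioi_lintegral_Ioc_swap 0 (by fun_prop)
    _ = ∫⁻ y in Ioi 0, ENNReal.ofReal y⁻¹ * ENNReal.ofReal (f y ^ 2) := by
        refine setLIntegral_congr_fun measurableSet_Ioi fun y hy => ?_
        rw [lintegral_mul_const' _ _ ENNReal.ofReal_ne_top,
          setLIntegral_congr Ioi_ae_eq_Ici.symm, lintegral_Ioi_inv_sq hy]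
    _ = ∫⁻ x in Ioi (0:ℝ), ENNReal.ofReal (f x ^ 2 / x) := by
        refine setLIntegral_congr_fun measurableSet_Ioi fun y hy => ?_
        rw [← ENNReal.ofReal_mul (inv_nonneg.mpr (le_of_lt hy)), div_eq_inv_mul]
end

section
/- For measurable f:(0,∞)→ℝ with ∫₀^∞ f(x)²/x dx < ∞, the quantity ∫₀^∞ ( f(x)²/x − (f(x)/x²)∫₀^x f(y) dy ) dx is nonnegative. -/
/-!
Once the integral is split, it suffices to prove the Hardy-type bound
`∫₀^∞ (|f x| / x²) ∫₀^x |f| ≤ ∫₀^∞ f(x)² / x`, which is done for lower Lebesgue integrals so that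
no integrability has to be tracked. On `0 < y ≤ x`, AM-GM gives
`|f x| |f y| ≤ f(x)²/2 + f(y)²/2`. Integrating over `y`, the first half contributes `f(x)²/(2x)`;
by Tonelli the second half becomes `∫ f(y)²/2 · ∫_y^∞ x⁻² dx dy = ∫ f(y)²/(2y)`.
If the integrand is not integrable, its Bochner integral is `0` and there is nothing to prove.
-/

open MeasureTheory Set
open scoped ENNReal

lemma ENNReal.mul_le_sq_div_two_add_sq_div_two (a b : ℝ≥0∞) : a * b ≤ a ^ 2 / 2 + b ^ 2 / 2 := by
  simpa using ENNReal.young_inequality a b Real.HolderConjugate.two_two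

lemma lintegral_Ici_ofReal_inv_sq {y : ℝ} (hy : 0 < y) :
    ∫⁻ x in Ici y, ENNReal.ofReal (x ^ 2)⁻¹ = ENNReal.ofReal y⁻¹ := by
  have hrpow : IntegrableOn (fun x : ℝ => x ^ (-2 : ℝ)) (Ioi y) :=
    integrableOn_Ioi_rpow_of_lt (by norm_num) hy
  calc ∫⁻ x in Ici y, ENNReal.ofReal (x ^ 2)⁻¹
      = ∫⁻ x in Ioi y, ENNReal.ofReal (x ^ (-2 : ℝ)) := by
        rw [setLIntegral_congr Ioi_ae_eq_Ici.symm]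
        refine setLIntegral_congr_fun measurableSet_Ioi fun x hx => ?_
        rw [Real.rpow_neg (hy.trans hx).le, Real.rpow_two]
    _ = ENNReal.ofReal (∫ x in Ioi y, x ^ (-2 : ℝ)) :=
        (ofReal_integral_eq_lintegral_ofReal hrpow
          ((ae_restrict_iff' measurableSet_Ioi).2 (.of_forall fun x hx =>
            Real.rpow_nonneg (hy.trans hx).le _))).symm
    _ = ENNReal.ofReal y⁻¹ := by
        rw [integral_Ioi_rpow_of_lt (by norm_num) hy]
        norm_num [Real.rpow_neg_one]

lemma lintegral_Ioi_lintegral_Ioc_mul_ofReal_inv_sq {h : ℝ → ℝ≥0∞} (hh : Measurable h) :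
    ∫⁻ x in Ioi 0, ∫⁻ y in Ioc 0 x, h y * ENNReal.ofReal (x ^ 2)⁻¹
      = ∫⁻ y in Ioi 0, h y * ENNReal.ofReal y⁻¹ := by
  set T : Set (ℝ × ℝ) := {p | 0 < p.2 ∧ p.2 ≤ p.1}
  set G : ℝ × ℝ → ℝ≥0∞ := fun p => h p.2 * ENNReal.ofReal (p.1 ^ 2)⁻¹
  have hG : Measurable (T.indicator G) := by
    refine Measurable.indicator (by fun_prop) ?_
    exact (measurableSet_lt measurable_const measurable_snd).inter
      (measurableSet_le measurable_snd measurable_fst)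
  have hx_section (x : ℝ) : ∫⁻ y, T.indicator G (x, y) = ∫⁻ y in Ioc 0 x, G (x, y) :=
    lintegral_indicator measurableSet_Ioc _
  have hy_section (y : ℝ) :
      ∫⁻ x, T.indicator G (x, y) = (Ioi 0).indicator (fun y => h y * ENNReal.ofReal y⁻¹) y := by
    rcases lt_or_ge 0 y with hy | hy
    · have : (fun x => T.indicator G (x, y)) = (Ici y).indicator (fun x => G (x, y)) := by
        ext x; simp [T, indicator, hy]
      rw [indicator_of_mem (show y ∈ Ioi 0 from hy), this, lintegral_indicator measurableSet_Ici]
      simp only [G]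
      rw [lintegral_const_mul _ (by fun_prop), lintegral_Ici_ofReal_inv_sq hy]
    · have : (fun x => T.indicator G (x, y)) = 0 := by
        ext x; simp [T, indicator, hy.not_gt]
      rw [indicator_of_notMem (show y ∉ Ioi 0 from hy.not_gt), this, lintegral_zero_fun]
  calc ∫⁻ x in Ioi 0, ∫⁻ y in Ioc 0 x, h y * ENNReal.ofReal (x ^ 2)⁻¹
      = ∫⁻ x, ∫⁻ y, T.indicator G (x, y) := by
        simp_rw [hx_section]
        refine setLIntegral_eq_of_support_subset fun x hx => ?_
        by_contra hx0
        exact hx (by simp [Ioc_eq_empty (show ¬ (0 : ℝ) < x from hx0)])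
    _ = ∫⁻ y, ∫⁻ x, T.indicator G (x, y) := lintegral_lintegral_swap hG.aemeasurable
    _ = ∫⁻ y in Ioi 0, h y * ENNReal.ofReal y⁻¹ := by
        simp_rw [hy_section]
        exact lintegral_indicator measurableSet_Ioi _

lemma mul_lintegral_Ioc_mul_ofReal_inv_sq_le {g : ℝ → ℝ≥0∞} (hg : Measurable g) {x : ℝ}
    (hx : 0 < x) :
    g x * (∫⁻ y in Ioc 0 x, g y) * ENNReal.ofReal (x ^ 2)⁻¹
      ≤ g x ^ 2 / 2 * ENNReal.ofReal x⁻¹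
        + ∫⁻ y in Ioc 0 x, g y ^ 2 / 2 * ENNReal.ofReal (x ^ 2)⁻¹ := by
  have hvol : ENNReal.ofReal (x ^ 2)⁻¹ * volume (Ioc 0 x) = ENNReal.ofReal x⁻¹ := by
    rw [Real.volume_Ioc, sub_zero, ← ENNReal.ofReal_mul (by positivity)]
    congr 1
    field_simp
  calc g x * (∫⁻ y in Ioc 0 x, g y) * ENNReal.ofReal (x ^ 2)⁻¹
      = ∫⁻ y in Ioc 0 x, g x * g y * ENNReal.ofReal (x ^ 2)⁻¹ := by
        rw [← lintegral_const_mul _ hg, ← lintegral_mul_const _ (by fun_prop)]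
    _ ≤ ∫⁻ y in Ioc 0 x, (g x ^ 2 / 2 + g y ^ 2 / 2) * ENNReal.ofReal (x ^ 2)⁻¹ := by
        gcongr with y
        exact ENNReal.mul_le_sq_div_two_add_sq_div_two _ _
    _ = g x ^ 2 / 2 * ENNReal.ofReal x⁻¹
          + ∫⁻ y in Ioc 0 x, g y ^ 2 / 2 * ENNReal.ofReal (x ^ 2)⁻¹ := by
        simp_rw [add_mul]
        rw [lintegral_add_left measurable_const, setLIntegral_const, mul_assoc, hvol]

theorem lintegral_mul_lintegral_Ioc_mul_ofReal_inv_sq_le {g : ℝ → ℝ≥0∞} (hg : Measurable g) :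
    ∫⁻ x in Ioi 0, g x * (∫⁻ y in Ioc 0 x, g y) * ENNReal.ofReal (x ^ 2)⁻¹
      ≤ ∫⁻ x in Ioi 0, g x ^ 2 * ENNReal.ofReal x⁻¹ := by
  have hg2 : Measurable fun x => g x ^ 2 / 2 := by fun_prop
  calc ∫⁻ x in Ioi 0, g x * (∫⁻ y in Ioc 0 x, g y) * ENNReal.ofReal (x ^ 2)⁻¹
      ≤ ∫⁻ x in Ioi 0, (g x ^ 2 / 2 * ENNReal.ofReal x⁻¹
          + ∫⁻ y in Ioc 0 x, g y ^ 2 / 2 * ENNReal.ofReal (x ^ 2)⁻¹) :=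
        setLIntegral_mono' measurableSet_Ioi fun x hx =>
          mul_lintegral_Ioc_mul_ofReal_inv_sq_le hg hx
    _ = ∫⁻ x in Ioi 0, (g x ^ 2 / 2 * ENNReal.ofReal x⁻¹ + g x ^ 2 / 2 * ENNReal.ofReal x⁻¹) := by
        rw [lintegral_add_left (by fun_prop), lintegral_Ioi_lintegral_Ioc_mul_ofReal_inv_sq hg2,
          lintegral_add_left (by fun_prop)]
    _ = ∫⁻ x in Ioi 0, g x ^ 2 * ENNReal.ofReal x⁻¹ := by
        simp_rw [← add_mul, ENNReal.add_halves]

lemma integral_le_integral_of_lintegral_enorm_le {α : Type*} [MeasurableSpace α] {μ : Measure α}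
    {u v : α → ℝ} (hv : Integrable v μ) (hv0 : 0 ≤ᵐ[μ] v)
    (h : ∫⁻ a, ‖u a‖ₑ ∂μ ≤ ∫⁻ a, ‖v a‖ₑ ∂μ) : ∫ a, u a ∂μ ≤ ∫ a, v a ∂μ := by
  rw [← ENNReal.ofReal_le_ofReal_iff (integral_nonneg_of_ae hv0)]
  calc ENNReal.ofReal (∫ a, u a ∂μ) ≤ ‖∫ a, u a ∂μ‖ₑ := Real.ofReal_le_enorm _
    _ ≤ ∫⁻ a, ‖u a‖ₑ ∂μ := enorm_integral_le_lintegral_enorm _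
    _ ≤ ∫⁻ a, ‖v a‖ₑ ∂μ := h
    _ = ENNReal.ofReal (∫ a, v a ∂μ) := by
        rw [ofReal_integral_eq_lintegral_ofReal hv hv0]
        exact lintegral_congr_ae (hv0.mono fun a ha => Real.enorm_of_nonneg ha)

lemma enorm_mul_intervalIntegral_div_sq_le (f : ℝ → ℝ) {x : ℝ} (hx : 0 < x) :
    ‖f x / x ^ 2 * ∫ y in (0 : ℝ)..x, f y‖ₑ
      ≤ ‖f x‖ₑ * (∫⁻ y in Ioc 0 x, ‖f y‖ₑ) * ENNReal.ofReal (x ^ 2)⁻¹ := by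
  rw [div_eq_mul_inv, mul_right_comm, enorm_mul, enorm_mul,
    Real.enorm_of_nonneg (inv_nonneg.2 (sq_nonneg x)),
    intervalIntegral.integral_of_le hx.le]
  gcongr
  exact enorm_integral_le_lintegral_enorm _

theorem sign_computation (f : ℝ → ℝ) (hf : Measurable f)
    (hint : IntegrableOn (fun x => f x ^ 2 / x) (Ioi 0)) :
    0 ≤ ∫ x in Ioi (0:ℝ), (f x ^ 2 / x - (f x / x ^ 2) * ∫ y in (0:ℝ)..x, f y) := by
  by_cases hI : IntegrableOn
      (fun x => f x ^ 2 / x - (f x / x ^ 2) * ∫ y in (0:ℝ)..x, f y) (Ioi 0)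
  swap
  · rw [integral_undef hI]
  have hB : IntegrableOn (fun x => (f x / x ^ 2) * ∫ y in (0:ℝ)..x, f y) (Ioi 0) := by
    simpa only [Pi.sub_def, sub_sub_cancel] using hint.sub hI
  rw [integral_sub hint hB, sub_nonneg]
  refine integral_le_integral_of_lintegral_enorm_le hint
    ((ae_restrict_iff' measurableSet_Ioi).2 (.of_forall fun x (hx : 0 < x) => by positivity)) ?_
  calc ∫⁻ x in Ioi 0, ‖f x / x ^ 2 * ∫ y in (0:ℝ)..x, f y‖ₑ
      ≤ ∫⁻ x in Ioi 0, ‖f x‖ₑ * (∫⁻ y in Ioc 0 x, ‖f y‖ₑ) * ENNReal.ofReal (x ^ 2)⁻¹ :=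
        setLIntegral_mono' measurableSet_Ioi fun x hx => enorm_mul_intervalIntegral_div_sq_le f hx
    _ ≤ ∫⁻ x in Ioi 0, ‖f x‖ₑ ^ 2 * ENNReal.ofReal x⁻¹ :=
        lintegral_mul_lintegral_Ioc_mul_ofReal_inv_sq_le hf.enorm
    _ = ∫⁻ x in Ioi 0, ‖f x ^ 2 / x‖ₑ := by
        refine setLIntegral_congr_fun measurableSet_Ioi fun x (hx : 0 < x) => ?_
        rw [div_eq_mul_inv, enorm_mul, enorm_pow, Real.enorm_of_nonneg (inv_nonneg.2 hx.le)]
end
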